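/- arXiv:2502.04889 — 4 statements merged into one kernel-verified Lean document; each statement's English description precedes it below -/
import Mathlib

section
/- For the semi-circle entropy $\phi(\mu) = -2\sqrt{\mu(1-\mu)}$ on $[0,1]$, the Fenchel--Young loss generated by $\phi$ equals $\ell(z) = \phi^*(-z) = \frac{-z + \sqrt{z^2+4}}{2}$ for all $z \in \mathbb{R}$, where $\phi^*(\theta) = \sup_{\mu\in[0,1]}[\theta\mu - \phi(\mu)]$. -/
/-! Writing `u = 2μ - 1` and `w = 2√(μ(1-μ))`, the map `μ ↦ (u, w)` sends `[0,1]` onto the upper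
half of the unit circle, and the objective becomes `-zμ + 2√(μ(1-μ)) = (-z + (-z) u + 2 w) / 2`.
By Cauchy–Schwarz `(-z) u + 2 w ≤ √(z² + 4)`, with equality at `(u, w) = (-z, 2) / √(z² + 4)`,
which lies on the upper half circle. -/

open Real Set

lemma mul_add_mul_le_sqrt_sq_add_sq {u w : ℝ} (a c : ℝ) (huw : u ^ 2 + w ^ 2 = 1) :
    a * u + c * w ≤ √(a ^ 2 + c ^ 2) :=
  le_sqrt_of_sq_le <| by nlinarith [sq_nonneg (a * w - c * u)]

lemma sq_two_mul_sub_one_add_sq_two_mul_sqrt {μ : ℝ} (hμ : μ ∈ Icc (0 : ℝ) 1) :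
    (2 * μ - 1) ^ 2 + (2 * √(μ * (1 - μ))) ^ 2 = 1 := by
  rw [mul_pow, sq_sqrt (mul_nonneg hμ.1 (sub_nonneg.2 hμ.2))]
  ring

lemma two_mul_sqrt_mul_one_sub_of_sq_add_sq {u w : ℝ} (hw : 0 ≤ w) (huw : u ^ 2 + w ^ 2 = 1) :
    2 * √((1 + u) / 2 * (1 - (1 + u) / 2)) = w := by
  have : (1 + u) / 2 * (1 - (1 + u) / 2) = (w / 2) ^ 2 := by linear_combination (-1 / 4 : ℝ) * huw
  rw [this, sqrt_sq (by positivity)]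
  ring

lemma mem_Icc_half_one_add_of_sq_add_sq {u w : ℝ} (huw : u ^ 2 + w ^ 2 = 1) :
    (1 + u) / 2 ∈ Icc (0 : ℝ) 1 := by
  have : |u| ≤ 1 := abs_le_one_iff_mul_self_le_one.2 (by nlinarith [sq_nonneg w])
  constructor <;> linarith [abs_le.1 this]

/-- The Fenchel–Young loss generated by the semi-circle entropy
`φ μ = -2√(μ(1-μ))` on `[0,1]` is `ℓ z = φ*(-z) = (-z + √(z²+4))/2`, where
`φ* θ = sup_{μ ∈ [0,1]} (θ μ - φ μ)`. -/
theorem semicircle_fenchel_young_loss :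
    ∀ z : ℝ,
      IsGreatest
        {v : ℝ | ∃ μ ∈ Set.Icc (0 : ℝ) 1,
          v = (-z) * μ - (-2 * Real.sqrt (μ * (1 - μ)))}
        ((-z + Real.sqrt (z ^ 2 + 4)) / 2) := by
  intro z
  have hnorm : (-z) ^ 2 + 2 ^ 2 = z ^ 2 + 4 := by ring
  set s := √(z ^ 2 + 4)
  have hs : 0 < s := sqrt_pos.2 (by positivity)
  have hs2 : s ^ 2 = z ^ 2 + 4 := sq_sqrt (by positivity)
  constructor
  · have hunit : (-z / s) ^ 2 + (2 / s) ^ 2 = 1 := by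
      rw [div_pow, div_pow, ← add_div, hnorm, ← hs2, div_self (by positivity)]
    refine ⟨(1 + -z / s) / 2, mem_Icc_half_one_add_of_sq_add_sq hunit, ?_⟩
    rw [neg_mul, neg_mul, sub_neg_eq_add,
      two_mul_sqrt_mul_one_sub_of_sq_add_sq (by positivity) hunit]
    field_simp
    linear_combination hs2
  · rintro v ⟨μ, hμ, rfl⟩
    have hcs := mul_add_mul_le_sqrt_sq_add_sq (-z) 2 (sq_two_mul_sub_one_add_sq_two_mul_sqrt hμ)
    rw [hnorm] at hcs
    linarith
end

section
/- For the semi-circle loss $\ell(z) = (-z+\sqrt{z^2+4})/2$, the function $\rho(\lambda) = \min_{z\in\mathbb{R}}\lambda\ell(z)+z^2$ satisfies $\rho(\lambda) \le \frac{5\lambda}{2\ln\lambda}$ for $\lambda$ large enough that $\lambda/\ln\lambda \ge (2/3)\ln^2\lambda$ and $\ln\lambda>0$. -/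
/-! Evaluate the minimised objective at the test point `z = log λ`. Since
`ℓ z = 2 / (z + √(z² + 4)) ≤ 1 / z`, this gives `ρ λ ≤ λ / log λ + log² λ`, and the
hypothesis bounds `log² λ` by `(3/2) λ / log λ`. -/

lemma sqrt_sq_add_four_le {z : ℝ} (hz : 0 < z) : √(z ^ 2 + 4) ≤ z + 2 / z := by
  refine Real.sqrt_le_iff.mpr ⟨by positivity, ?_⟩
  have hsq : (z + 2 / z) ^ 2 = z ^ 2 + 4 + (2 / z) ^ 2 := by
    field_simp
    ring
  nlinarith [sq_nonneg (2 / z)]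

lemma semicircle_le_inv {z : ℝ} (hz : 0 < z) : (-z + √(z ^ 2 + 4)) / 2 ≤ 1 / z := by
  have hsqrt := sqrt_sq_add_four_le hz
  have htwo : 2 / z = 2 * (1 / z) := by ring
  linarith

/-- For the semi-circle loss `ℓ z = (-z + √(z²+4))/2`, the function
`ρ λ = min_z (λ ℓ z + z²)` satisfies `ρ λ ≤ 5 λ / (2 ln λ)` whenever
`λ / ln λ ≥ (2/3) (ln λ)²` and `ln λ > 0`. -/
theorem semicircle_rho_bound
    (ℓ : ℝ → ℝ) (hℓ : ∀ z, ℓ z = (-z + Real.sqrt (z ^ 2 + 4)) / 2)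
    (ρ : ℝ → ℝ)
    (hρ : ∀ lam : ℝ, 0 < Real.log lam →
      IsLeast {v : ℝ | ∃ z : ℝ, v = lam * ℓ z + z ^ 2} (ρ lam)) :
    ∀ lam : ℝ, 0 < Real.log lam →
      lam / Real.log lam ≥ (2 / 3) * (Real.log lam) ^ 2 →
      ρ lam ≤ 5 * lam / (2 * Real.log lam) := by
  intro lam hL hratio
  set L := Real.log lam
  have hlam : 0 < lam :=
    (div_pos_iff_of_pos_right hL).mp (lt_of_lt_of_le (by positivity) hratio)
  have hρ_le : ρ lam ≤ lam * ℓ L + L ^ 2 := (hρ lam hL).2 ⟨L, rfl⟩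
  have hℓ_le : lam * ℓ L ≤ lam / L :=
    calc lam * ℓ L ≤ lam * (1 / L) :=
          mul_le_mul_of_nonneg_left ((hℓ L).trans_le (semicircle_le_inv hL)) hlam.le
      _ = lam / L := mul_one_div lam L
  calc ρ lam ≤ lam / L + 3 / 2 * (lam / L) := by linarith
    _ = 5 * lam / (2 * L) := by field_simp; ring
end

section
/- For the Tsallis entropy $\phi(\mu) = \frac{\mu^q+(1-\mu)^q-1}{q-1}$ with $q \ge 2$, the limit $\lim_{\mu\downarrow 0} \frac{\phi'(\mu)}{\mu\phi''(\mu)}\left[1 - \frac{\phi(\mu)}{\mu\phi'(\mu)}\right] = \frac{1}{2}$. -/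
open Real Filter Set

/-!
The expression equals `(μ φ' - φ) / (μ² φ'')`, and `μ φ' - φ = μ^q + R(μ) / (q - 1)` with
`R(μ) = 1 - (1 + (q-1)μ)(1-μ)^(q-1)`. Hence it is
`((q-1) μ^(q-2) + R(μ)/μ²) / (q (q-1) (μ^(q-2) + (1-μ)^(q-2)))`.
Since `R(0) = 0` and `R'(μ) = q (q-1) μ (1-μ)^(q-2)`, one application of l'Hôpital's rule gives
`R(μ)/μ² → q (q-1) / 2`, while `μ^(q-2) → L = 0^(q-2)` (continuity needs `q ≥ 2`).
The limit is `((q-1) L + q (q-1)/2) / (q (q-1) (L + 1))`, which is `1/2` because `L (q - 2) = 0`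
(`L = 1` for `q = 2` and `L = 0` for `q > 2`).
-/

open Topology

noncomputable def tsallisRemainder (q μ : ℝ) : ℝ :=
  1 - (1 + (q - 1) * μ) * (1 - μ) ^ (q - 1)

lemma hasDerivAt_tsallisRemainder (q : ℝ) {μ : ℝ} (hμ : μ < 1) :
    HasDerivAt (tsallisRemainder q) (q * (q - 1) * μ * (1 - μ) ^ (q - 2)) μ := by
  have hpos : 0 < 1 - μ := by linarith
  have hpow : HasDerivAt (fun μ : ℝ => (1 - μ) ^ (q - 1))
      ((q - 1) * (1 - μ) ^ (q - 1 - 1) * -1) μ :=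
    (hasDerivAt_rpow_const (Or.inl hpos.ne')).comp μ ((hasDerivAt_id μ).const_sub 1)
  have hlin : HasDerivAt (fun μ : ℝ => 1 + (q - 1) * μ) (q - 1) μ := by
    simpa using ((hasDerivAt_id μ).const_mul (q - 1)).const_add 1
  refine ((hlin.mul hpow).const_sub 1).congr_deriv ?_
  rw [show q - 1 - 1 = q - 2 by ring, show q - 1 = q - 2 + 1 by ring, rpow_add_one hpos.ne']
  ring

lemma tendsto_one_sub_rpow_nhdsGT_zero (p : ℝ) :
    Tendsto (fun μ : ℝ => (1 - μ) ^ p) (𝓝[>] 0) (𝓝 1) := by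
  have h : ContinuousAt (fun μ : ℝ => (1 - μ) ^ p) 0 :=
    (continuousAt_rpow_const _ p (Or.inl (by norm_num))).comp
      (continuousAt_const.sub continuousAt_id)
  simpa using h.tendsto.mono_left nhdsWithin_le_nhds

lemma tendsto_tsallisRemainder_nhdsGT_zero (q : ℝ) :
    Tendsto (tsallisRemainder q) (𝓝[>] 0) (𝓝 0) := by
  have h := (hasDerivAt_tsallisRemainder q zero_lt_one).continuousAt.tendsto.mono_left
    (nhdsWithin_le_nhds (s := Ioi 0))
  simpa [tsallisRemainder] using h

lemma tendsto_tsallisRemainder_div_sq (q : ℝ) :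
    Tendsto (fun μ => tsallisRemainder q μ / μ ^ 2) (𝓝[>] 0) (𝓝 (q * (q - 1) / 2)) := by
  refine HasDerivAt.lhopital_zero_nhdsGT (f' := fun μ => q * (q - 1) * μ * (1 - μ) ^ (q - 2))
    (g' := fun μ => 2 * μ) ?_ ?_ ?_ (tendsto_tsallisRemainder_nhdsGT_zero q) ?_ ?_
  · filter_upwards [Ioo_mem_nhdsGT (zero_lt_one' ℝ)] with μ hμ
    exact hasDerivAt_tsallisRemainder q hμ.2
  · filter_upwards with μ
    simpa using hasDerivAt_pow 2 μ
  · filter_upwards [self_mem_nhdsWithin] with μ (hμ : 0 < μ)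
    positivity
  · simpa using ((continuous_pow 2).tendsto (0 : ℝ)).mono_left nhdsWithin_le_nhds
  · have h := ((tendsto_one_sub_rpow_nhdsGT_zero (q - 2)).const_mul (q * (q - 1))).div_const 2
    rw [mul_one] at h
    refine h.congr' ?_
    filter_upwards [self_mem_nhdsWithin] with μ (hμ : 0 < μ)
    field_simp

lemma tsallis_exponent_eq {q μ : ℝ} (hq : 1 < q) (hμ0 : 0 < μ) (hμ : μ < 1 / 2) :
    q / (q - 1) * (μ ^ (q - 1) - (1 - μ) ^ (q - 1)) /
        (μ * (q * (μ ^ (q - 2) + (1 - μ) ^ (q - 2)))) *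
      (1 - (μ ^ q + (1 - μ) ^ q - 1) / (q - 1) /
        (μ * (q / (q - 1) * (μ ^ (q - 1) - (1 - μ) ^ (q - 1))))) =
    ((q - 1) * μ ^ (q - 2) + tsallisRemainder q μ / μ ^ 2) /
      (q * (q - 1) * (μ ^ (q - 2) + (1 - μ) ^ (q - 2))) := by
  have hν : 0 < 1 - μ := by linarith
  have hlt : μ ^ (q - 1) < (1 - μ) ^ (q - 1) := by
    gcongr
    all_goals linarith
  have hsplit : ∀ {x : ℝ}, 0 < x →
      x ^ (q - 1) = x ^ (q - 2) * x ∧ x ^ q = x ^ (q - 2) * x ^ 2 := by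
    intro x hx
    constructor
    · rw [← rpow_add_one hx.ne']; ring_nf
    · rw [← rpow_natCast, ← rpow_add hx]; norm_num
  obtain ⟨hμ1, hμ2⟩ := hsplit hμ0
  obtain ⟨hν1, hν2⟩ := hsplit hν
  rw [hμ1, hν1] at hlt
  rw [tsallisRemainder, hμ1, hν1, hμ2, hν2]
  generalize μ ^ (q - 2) = a at *
  generalize (1 - μ) ^ (q - 2) = b at *
  have hd : a * μ - b * (1 - μ) ≠ 0 := by linarith
  have hq1 : q - 1 ≠ 0 := by linarith
  field_simp
  ring

lemma zero_rpow_mul_self (x : ℝ) : (0 : ℝ) ^ x * x = 0 := by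
  rcases eq_or_ne x 0 with rfl | hx
  · simp
  · simp [zero_rpow hx]

/-- For the Tsallis entropy `φ μ = (μ^q + (1-μ)^q - 1)/(q-1)`
with `q ≥ 2`, where `φ' μ = (q/(q-1)) q [μ^{q-1} - (1-μ)^{q-1}]`—i.e.
`φ' μ = (q/(q-1))[...]` and `φ'' μ = q[μ^{q-2} + (1-μ)^{q-2}]`—the limit as
`μ ↓ 0` of `(φ' μ)/(μ φ'' μ) * (1 - φ μ / (μ φ' μ))` is `1/2`. -/
theorem tsallis_exponent_limit_q_ge_two (q : ℝ) (hq : 2 ≤ q) :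
    Tendsto
      (fun μ : ℝ =>
        let φ := (μ ^ q + (1 - μ) ^ q - 1) / (q - 1)
        let φ' := (q / (q - 1)) * (μ ^ (q - 1) - (1 - μ) ^ (q - 1))
        let φ'' := q * (μ ^ (q - 2) + (1 - μ) ^ (q - 2))
        φ' / (μ * φ'') * (1 - φ / (μ * φ')))
      (nhdsWithin 0 (Set.Ioi 0)) (nhds (1 / 2)) := by
  have hq1 : 0 < q - 1 := by linarith
  have hpow : Tendsto (fun μ : ℝ => μ ^ (q - 2)) (𝓝[>] 0) (𝓝 ((0 : ℝ) ^ (q - 2))) :=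
    (continuousAt_rpow_const 0 (q - 2) (Or.inr (by linarith))).tendsto.mono_left
      nhdsWithin_le_nhds
  set L := (0 : ℝ) ^ (q - 2)
  have hL : 0 ≤ L := rpow_nonneg le_rfl _
  have hlim := ((hpow.const_mul (q - 1)).add (tendsto_tsallisRemainder_div_sq q)).div
    ((hpow.add (tendsto_one_sub_rpow_nhdsGT_zero (q - 2))).const_mul (q * (q - 1)))
    (by positivity)
  have hval : ((q - 1) * L + q * (q - 1) / 2) / (q * (q - 1) * (L + 1)) = 1 / 2 := by
    have hL2 : L * (q - 2) = 0 := zero_rpow_mul_self (q - 2)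
    field_simp
    linear_combination -hL2
  rw [← hval]
  refine hlim.congr' ?_
  filter_upwards [Ioo_mem_nhdsGT (by norm_num : (0 : ℝ) < 1 / 2)] with μ hμ
  exact (tsallis_exponent_eq (by linarith) hμ.1 hμ.2).symm
end

section
/- (Split-optimization regret bound.) Under the same data assumptions as the perceptron-type setting ($\|\mathbf{z}_i\|\le 1$, $\langle\mathbf{w}_*,\mathbf{z}_i\rangle\ge\gamma$, $\|\mathbf{w}_*\|=1$), let $\ell$ be convex, nonincreasing, differentiable with $|\ell'| \le C_g$, and run GD $\mathbf{w}_{k+1}=\mathbf{w}_k-\eta\nabla L(\mathbf{w}_k)$ from $\mathbf{w}_0$. For any $\theta \ge 0$, with $\mathbf{u} := (\theta + \frac{\eta C_g}{2\gamma})\mathbf{w}_*$, for every $t \ge 1$: $\frac{\|\mathbf{w}_t-\mathbf{u}\|^2}{2\eta t} + \frac1t\sum_{k=0}^{t-1}L(\mathbf{w}_k) \le \ell(\gamma\theta) + \frac{\|\mathbf{w}_0-\mathbf{u}\|^2}{2\eta t}$. -/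
/-!
Write `g := ∇L(w_k)` and `u = u₁ + u₂` with `u₁ = θ w_*`, `u₂ = (η C_g / 2γ) w_*`. Expanding the
square, `‖w_{k+1} - u‖² = ‖w_k - u‖² + 2η⟪u₁ - w_k, g⟫ + η (2⟪u₂, g⟫ + η‖g‖²)`. The tangent-line
inequality for `ℓ`, together with `⟪u₁, z_i⟫ ≥ γθ` and monotonicity, gives
`⟪u₁ - w_k, g⟫ + L(w_k) ≤ ℓ(γθ)`. Since `ℓ' ≤ 0`, with `S := mean of -ℓ'(⟪w_k, z_i⟫)` we have
`‖g‖ ≤ S ≤ C_g` and `⟪w_*, g⟫ ≤ -γ S` by the margin, so the last bracket is nonpositive.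
Summing the resulting one-step inequality over `k < t` telescopes.
-/

open RealInnerProductSpace Set Finset

theorem ConvexOn.add_deriv_mul_sub_le {S : Set ℝ} {f : ℝ → ℝ} (hf : ConvexOn ℝ S f) {x y : ℝ}
    (hx : x ∈ S) (hy : y ∈ S) (hfx : DifferentiableAt ℝ f x) :
    f x + deriv f x * (y - x) ≤ f y := by
  rcases lt_trichotomy x y with h | rfl | h
  · have := hf.deriv_le_slope hx hy h hfx
    rw [slope_def_field, le_div_iff₀ (sub_pos.2 h)] at this
    linarith
  · simp
  · have := hf.slope_le_deriv hy hx h hfx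
    rw [slope_def_field, div_le_iff₀ (sub_pos.2 h)] at this
    linarith

theorem average_add_le_of_forall_add_le {D a : ℕ → ℝ} {b c : ℝ} (hc : 0 < c)
    (hstep : ∀ k, D (k + 1) + c * a k ≤ D k + c * b) {t : ℕ} (ht : 1 ≤ t) :
    D t / (c * t) + (t : ℝ)⁻¹ * ∑ k ∈ range t, a k ≤ b + D 0 / (c * t) := by
  have hsum : ∀ t : ℕ, D t + c * ∑ k ∈ range t, a k ≤ D 0 + t * (c * b) := by
    intro t
    induction t with
    | zero => simp
    | succ t ih =>
      rw [sum_range_succ, Nat.cast_succ]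
      linarith [hstep t]
  have ht₀ : (0 : ℝ) < t := by exact_mod_cast ht
  calc D t / (c * t) + (t : ℝ)⁻¹ * ∑ k ∈ range t, a k
      = (D t + c * ∑ k ∈ range t, a k) / (c * t) := by field_simp
    _ ≤ (D 0 + t * (c * b)) / (c * t) := div_le_div_of_nonneg_right (hsum t) (by positivity)
    _ = b + D 0 / (c * t) := by field_simp; ring

section InnerProductSpace

variable {E : Type*} [NormedAddCommGroup E] [InnerProductSpace ℝ E] {n : ℕ}

theorem norm_sub_smul_sub_add_sq_add_le {w g u₁ u₂ : E} {η a b : ℝ} (hη : 0 ≤ η)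
    (h₁ : ⟪u₁ - w, g⟫ + a ≤ b) (h₂ : 2 * ⟪u₂, g⟫ + η * ‖g‖ ^ 2 ≤ 0) :
    ‖w - η • g - (u₁ + u₂)‖ ^ 2 + 2 * η * a ≤ ‖w - (u₁ + u₂)‖ ^ 2 + 2 * η * b := by
  have hinner : ⟪w - (u₁ + u₂), g⟫ = -⟪u₁ - w, g⟫ - ⟪u₂, g⟫ := by
    rw [show w - (u₁ + u₂) = -(u₁ - w) - u₂ by abel, inner_sub_left, inner_neg_left]
  rw [show w - η • g - (u₁ + u₂) = (w - (u₁ + u₂)) - η • g by abel, norm_sub_sq_real,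
    real_inner_smul_right, norm_smul, Real.norm_of_nonneg hη, hinner]
  nlinarith [mul_le_mul_of_nonneg_left h₁ hη, mul_le_mul_of_nonneg_left h₂ hη]

noncomputable def empiricalRisk (ℓ : ℝ → ℝ) (z : Fin n → E) (v : E) : ℝ :=
  (n : ℝ)⁻¹ * ∑ i, ℓ ⟪v, z i⟫

noncomputable def empiricalRiskGrad (ℓ : ℝ → ℝ) (z : Fin n → E) (v : E) : E :=
  (n : ℝ)⁻¹ • ∑ i, deriv ℓ ⟪v, z i⟫ • z i

variable {ℓ : ℝ → ℝ} {z : Fin n → E}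

theorem inner_empiricalRiskGrad (x v : E) :
    ⟪x, empiricalRiskGrad ℓ z v⟫ = (n : ℝ)⁻¹ * ∑ i, deriv ℓ ⟪v, z i⟫ * ⟪x, z i⟫ := by
  simp only [empiricalRiskGrad, real_inner_smul_right, inner_sum]

theorem inner_sub_empiricalRiskGrad_add_empiricalRisk_le (hn : 0 < n)
    (hconv : ConvexOn ℝ univ ℓ) (hdiff : Differentiable ℝ ℓ) (hmono : Antitone ℓ)
    {u : E} {m : ℝ} (hm : ∀ i, m ≤ ⟪u, z i⟫) (v : E) :
    ⟪u - v, empiricalRiskGrad ℓ z v⟫ + empiricalRisk ℓ z v ≤ ℓ m := by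
  have hpt : ∀ i, deriv ℓ ⟪v, z i⟫ * ⟪u - v, z i⟫ + ℓ ⟪v, z i⟫ ≤ ℓ m := fun i => by
    have := hconv.add_deriv_mul_sub_le (mem_univ ⟪v, z i⟫) (mem_univ ⟪u, z i⟫) (hdiff _)
    rw [inner_sub_left]
    linarith [hmono (hm i)]
  calc ⟪u - v, empiricalRiskGrad ℓ z v⟫ + empiricalRisk ℓ z v
      = (n : ℝ)⁻¹ * ∑ i, (deriv ℓ ⟪v, z i⟫ * ⟪u - v, z i⟫ + ℓ ⟪v, z i⟫) := by
        rw [inner_empiricalRiskGrad, empiricalRisk, sum_add_distrib, mul_add]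
    _ ≤ (n : ℝ)⁻¹ * ∑ _i : Fin n, ℓ m := by gcongr with i; exact hpt i
    _ = ℓ m := by simp; field_simp

theorem norm_empiricalRiskGrad_le (hmono : Antitone ℓ) (hz : ∀ i, ‖z i‖ ≤ 1) (v : E) :
    ‖empiricalRiskGrad ℓ z v‖ ≤ (n : ℝ)⁻¹ * ∑ i, -deriv ℓ ⟪v, z i⟫ := by
  rw [empiricalRiskGrad, norm_smul, Real.norm_of_nonneg (by positivity)]
  gcongr
  refine (norm_sum_le _ _).trans (sum_le_sum fun i _ => ?_)
  rw [norm_smul, Real.norm_eq_abs, abs_of_nonpos hmono.deriv_nonpos]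
  exact mul_le_of_le_one_right (neg_nonneg.2 hmono.deriv_nonpos) (hz i)

theorem mul_le_neg_inner_empiricalRiskGrad (hmono : Antitone ℓ) {u : E} {γ : ℝ}
    (hγ : ∀ i, γ ≤ ⟪u, z i⟫) (v : E) :
    γ * ((n : ℝ)⁻¹ * ∑ i, -deriv ℓ ⟪v, z i⟫) ≤ -⟪u, empiricalRiskGrad ℓ z v⟫ := by
  rw [inner_empiricalRiskGrad, mul_left_comm, mul_sum, ← mul_neg, ← sum_neg_distrib]
  gcongr with i
  linarith [mul_le_mul_of_nonpos_left (hγ i) (hmono.deriv_nonpos (x := ⟪v, z i⟫))]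

theorem two_inner_smul_empiricalRiskGrad_add_mul_sq_nonpos (hmono : Antitone ℓ)
    (hz : ∀ i, ‖z i‖ ≤ 1) {Cg : ℝ} (hlip : ∀ s, |deriv ℓ s| ≤ Cg) {u : E} {γ η : ℝ} (hγ : 0 < γ)
    (hsep : ∀ i, γ ≤ ⟪u, z i⟫) (hη : 0 ≤ η) (v : E) :
    2 * ⟪(η * Cg / (2 * γ)) • u, empiricalRiskGrad ℓ z v⟫ + η * ‖empiricalRiskGrad ℓ z v‖ ^ 2
      ≤ 0 := by
  set g := empiricalRiskGrad ℓ z v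
  set S := (n : ℝ)⁻¹ * ∑ i, -deriv ℓ ⟪v, z i⟫
  have hnorm : ‖g‖ ≤ S := norm_empiricalRiskGrad_le hmono hz v
  have hmargin : γ * S ≤ -⟪u, g⟫ := mul_le_neg_inner_empiricalRiskGrad hmono hsep v
  have hCg : 0 ≤ Cg := (abs_nonneg _).trans (hlip 0)
  have hSC : S ≤ Cg := by
    rcases Nat.eq_zero_or_pos n with rfl | hn
    · simpa [S] using hCg
    rw [inv_mul_le_iff₀ (by exact_mod_cast hn)]
    simpa using sum_le_sum fun i (_ : i ∈ Finset.univ) => (neg_le_abs _).trans (hlip ⟪v, z i⟫)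
  have hsq : η * ‖g‖ ^ 2 ≤ η * Cg * S := by
    have : ‖g‖ ^ 2 ≤ Cg * S :=
      calc ‖g‖ ^ 2 ≤ S ^ 2 := pow_le_pow_left₀ (norm_nonneg g) hnorm 2
        _ ≤ Cg * S := by
          rw [sq]; exact mul_le_mul_of_nonneg_right hSC ((norm_nonneg g).trans hnorm)
    rw [mul_assoc]
    exact mul_le_mul_of_nonneg_left this hη
  have hinner : 2 * ⟪(η * Cg / (2 * γ)) • u, g⟫ ≤ -(η * Cg * S) :=
    calc 2 * ⟪(η * Cg / (2 * γ)) • u, g⟫ = η * Cg / γ * ⟪u, g⟫ := by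
          rw [real_inner_smul_left]; field_simp
      _ ≤ η * Cg / γ * -(γ * S) := by gcongr; linarith
      _ = -(η * Cg * S) := by field_simp
  linarith

end InnerProductSpace

theorem split_optimization_regret_bound_general
    {E : Type*} [NormedAddCommGroup E] [InnerProductSpace ℝ E]
    (n : ℕ) (hn : 0 < n) (z : Fin n → E) (hz : ∀ i, ‖z i‖ ≤ 1)
    (wstar : E) (γ : ℝ) (hγ : 0 < γ)
    (hsep : ∀ i, γ ≤ ⟪wstar, z i⟫)
    (ℓ : ℝ → ℝ) (hdiff : Differentiable ℝ ℓ)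
    (hconv : ConvexOn ℝ Set.univ ℓ) (hmono : Antitone ℓ)
    (Cg : ℝ) (hlip : ∀ s : ℝ, |deriv ℓ s| ≤ Cg)
    (η : ℝ) (hη : 0 < η)
    (L : E → ℝ) (hL : ∀ v : E, L v = (n : ℝ)⁻¹ * ∑ i : Fin n, ℓ (⟪v, z i⟫))
    (w : ℕ → E)
    (hupd : ∀ t : ℕ, w (t + 1) =
      w t - η • ((n : ℝ)⁻¹ • ∑ i : Fin n, deriv ℓ (⟪w t, z i⟫) • z i))
    (θ : ℝ) (hθ : 0 ≤ θ) :
    ∀ t : ℕ, 1 ≤ t →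
      ‖w t - (θ + η * Cg / (2 * γ)) • wstar‖ ^ 2 / (2 * η * t) +
          (t : ℝ)⁻¹ * ∑ k ∈ Finset.range t, L (w k) ≤
        ℓ (γ * θ) +
          ‖w 0 - (θ + η * Cg / (2 * γ)) • wstar‖ ^ 2 / (2 * η * t) := by
  intro t ht
  obtain rfl : L = empiricalRisk ℓ z := funext hL
  have hmargin : ∀ i, γ * θ ≤ ⟪θ • wstar, z i⟫ := fun i => by
    rw [real_inner_smul_left, mul_comm]
    exact mul_le_mul_of_nonneg_left (hsep i) hθ
  refine average_add_le_of_forall_add_le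
    (D := fun k => ‖w k - (θ + η * Cg / (2 * γ)) • wstar‖ ^ 2)
    (a := fun k => empiricalRisk ℓ z (w k))
    (by positivity) (fun k => ?_) ht
  rw [hupd k, add_smul]
  exact norm_sub_smul_sub_add_sq_add_le hη.le
    (inner_sub_empiricalRiskGrad_add_empiricalRisk_le hn hconv hdiff hmono hmargin _)
    (two_inner_smul_empiricalRiskGrad_add_mul_sq_nonpos hmono hz hlip hγ hsep hη.le _)

/-- Split-optimization regret bound. -/
theorem split_optimization_regret_bound
    {E : Type*} [NormedAddCommGroup E] [InnerProductSpace ℝ E]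
    (n : ℕ) (hn : 0 < n) (z : Fin n → E) (hz : ∀ i, ‖z i‖ ≤ 1)
    (wstar : E) (hwstar : ‖wstar‖ = 1) (γ : ℝ) (hγ : 0 < γ)
    (hsep : ∀ i, γ ≤ ⟪wstar, z i⟫)
    (ℓ : ℝ → ℝ) (hdiff : Differentiable ℝ ℓ)
    (hconv : ConvexOn ℝ Set.univ ℓ) (hmono : Antitone ℓ)
    (Cg : ℝ) (hCg : 0 < Cg) (hlip : ∀ s : ℝ, |deriv ℓ s| ≤ Cg)
    (η : ℝ) (hη : 0 < η)
    (L : E → ℝ) (hL : ∀ v : E, L v = (n : ℝ)⁻¹ * ∑ i : Fin n, ℓ (⟪v, z i⟫))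
    (w : ℕ → E)
    (hupd : ∀ t : ℕ, w (t + 1) =
      w t - η • ((n : ℝ)⁻¹ • ∑ i : Fin n, deriv ℓ (⟪w t, z i⟫) • z i))
    (θ : ℝ) (hθ : 0 ≤ θ) :
    ∀ t : ℕ, 1 ≤ t →
      ‖w t - (θ + η * Cg / (2 * γ)) • wstar‖ ^ 2 / (2 * η * t) +
          (t : ℝ)⁻¹ * ∑ k ∈ Finset.range t, L (w k) ≤
        ℓ (γ * θ) +
          ‖w 0 - (θ + η * Cg / (2 * γ)) • wstar‖ ^ 2 / (2 * η * t) :=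
  split_optimization_regret_bound_general n hn z hz wstar γ hγ hsep ℓ hdiff hconv hmono Cg hlip η hη
    L hL w hupd θ hθ
end
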